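/- arXiv:1505.07132 — 3 statements merged into one kernel-verified Lean document; each statement's English description precedes it below -/
import Mathlib

section
/- Let u be a C² solution of u'' + ((N-1)/r)u' + f(u) = 0 on (0,R) with f continuous and F(s) = ∫₀ˢ f(t)dt. Define the Pohozaev functional E(r) = 2 r^N (|u'(r)|²/2 + F(u(r))) + (N-2) r^{N-1} u'(r) u(r). Then E'(r) = r^{N-1} Q(u(r)) for all r in (0,R), where Q(s) = 2N F(s) - (N-2) s f(s). -/
/-!
Differentiate `E` term by term and substitute `u'' = -((N - 1)/r) u' - f(u)`. The `u'^2` terms carry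
the coefficient `N - 2(N - 1) + (N - 2) = 0`, the `u u'` terms from `(N - 2) r^(N-1) u' u` cancel
against the drift part of `u''`, and `± 2 r^N f(u) u'` cancel, leaving `r^(N-1) Q(u)`.
-/

open Set

noncomputable def pohozaevFunctional (N : ℕ) (F u u' : ℝ → ℝ) (r : ℝ) : ℝ :=
  2 * r ^ N * (u' r ^ 2 / 2 + F (u r)) + ((N : ℝ) - 2) * r ^ (N - 1) * u' r * u r

noncomputable def pohozaevQ (N : ℕ) (F f : ℝ → ℝ) (s : ℝ) : ℝ :=
  2 * (N : ℝ) * F s - ((N : ℝ) - 2) * s * f s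

-- Writing the derivative as `k r^k / r` avoids the truncated exponent `k - 1`.
theorem hasDerivAt_pow_eq_mul_pow_div (k : ℕ) {r : ℝ} (hr : r ≠ 0) :
    HasDerivAt (fun x : ℝ => x ^ k) (k * r ^ k / r) r := by
  refine (hasDerivAt_pow k r).congr_deriv ?_
  cases k with
  | zero => simp
  | succ k => field_simp; simp [pow_succ]

theorem hasDerivAt_pohozaevFunctional {N : ℕ} (hN : 1 ≤ N) {f F u u' : ℝ → ℝ} {r : ℝ}
    (hr : r ≠ 0) (hu : HasDerivAt u (u' r) r)
    (hode : HasDerivAt u' (-(((N : ℝ) - 1) / r * u' r + f (u r))) r)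
    (hF : HasDerivAt F (f (u r)) (u r)) :
    HasDerivAt (pohozaevFunctional N F u u') (r ^ (N - 1) * pohozaevQ N F f (u r)) r := by
  obtain ⟨n, rfl⟩ : ∃ n, N = n + 1 := ⟨N - 1, by omega⟩
  have hFu : HasDerivAt (F ∘ u) (f (u r) * u' r) r := hF.comp r hu
  have hEnergy := (hode.pow 2).div_const 2 |>.add hFu
  have hFirst := (hasDerivAt_pow_eq_mul_pow_div (n + 1) hr).const_mul 2 |>.mul hEnergy
  have hSecond := ((hasDerivAt_pow_eq_mul_pow_div n hr).const_mul
    (((n + 1 : ℕ) : ℝ) - 2)).mul hode |>.mul hu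
  refine (hFirst.add hSecond).congr_deriv ?_
  simp only [pohozaevQ, Nat.add_sub_cancel, Pi.add_apply, Pi.mul_apply, Pi.pow_apply,
    Function.comp_apply]
  push_cast
  field_simp
  ring

theorem pohozaev_derivative_general
    (N : ℕ) (hN : 2 ≤ N) (f : ℝ → ℝ) (hf : Continuous f)
    (R : ℝ) (u u' : ℝ → ℝ)
    (hu : ∀ r ∈ Ioo (0:ℝ) R, HasDerivAt u (u' r) r)
    (hode : ∀ r ∈ Ioo (0:ℝ) R,
      HasDerivAt u' (-(((N:ℝ) - 1) / r * u' r + f (u r))) r) :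
    ∀ r ∈ Ioo (0:ℝ) R,
      HasDerivAt
        (fun r => 2 * r ^ N * ((u' r) ^ 2 / 2 + ∫ t in (0:ℝ)..(u r), f t)
          + ((N:ℝ) - 2) * r ^ (N - 1) * u' r * u r)
        (r ^ (N - 1) *
          (2 * (N:ℝ) * (∫ t in (0:ℝ)..(u r), f t) - ((N:ℝ) - 2) * u r * f (u r))) r := by
  intro r hr
  exact hasDerivAt_pohozaevFunctional (F := fun s => ∫ t in (0:ℝ)..s, f t) (by omega)
    hr.1.ne' (hu r hr) (hode r hr) (hf.integral_hasStrictDerivAt 0 (u r)).hasDerivAt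

/-- Pohozaev identity: E'(r) = r^{N-1} Q(u(r)). -/
theorem pohozaev_derivative
    (N : ℕ) (hN : 2 ≤ N) (f : ℝ → ℝ) (hf : Continuous f)
    (R : ℝ) (hR : 0 < R) (u u' : ℝ → ℝ)
    (hu : ∀ r ∈ Ioo (0:ℝ) R, HasDerivAt u (u' r) r)
    (hode : ∀ r ∈ Ioo (0:ℝ) R,
      HasDerivAt u' (-(((N:ℝ) - 1) / r * u' r + f (u r))) r) :
    ∀ r ∈ Ioo (0:ℝ) R,
      HasDerivAt
        (fun r => 2 * r ^ N * ((u' r) ^ 2 / 2 + ∫ t in (0:ℝ)..(u r), f t)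
          + ((N:ℝ) - 2) * r ^ (N - 1) * u' r * u r)
        (r ^ (N - 1) *
          (2 * (N:ℝ) * (∫ t in (0:ℝ)..(u r), f t) - ((N:ℝ) - 2) * u r * f (u r))) r :=
  pohozaev_derivative_general N hN f hf R u u' hu hode
end

section
/- Let u be a C² solution of u'' + ((N-1)/r)u' + f(u) = 0 on [r₁, r₂] ⊂ (0,∞) with f continuous, and let C > 0 be such that |u'(r)| ≤ C on [r₁, r₂]. If f(u(r)) ≥ f̄ > 0 for all r ∈ [r₁, r₂] and r₁ ≥ 2(N-1)C/f̄, then |u''(r)| ≥ f̄/2 on [r₁, r₂], and consequently r₂ - r₁ ≤ 4C/f̄. -/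
open Set

/-- If f(u) ≥ f̄ > 0 on [r₁,r₂], |u'| ≤ C, and r₁ ≥ 2(N-1)C/f̄, then
|u''| ≥ f̄/2 and r₂ - r₁ ≤ 4C/f̄. -/
theorem second_derivative_bound
    (N : ℕ) (hN : 2 ≤ N) (f : ℝ → ℝ) (hf : Continuous f)
    (r₁ r₂ C fbar : ℝ) (hr₁ : 0 < r₁) (hr₁₂ : r₁ < r₂)
    (hC : 0 < C) (hfbar : 0 < fbar)
    (u u' u'' : ℝ → ℝ)
    (hu : ∀ r ∈ Icc r₁ r₂, HasDerivAt u (u' r) r)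
    (hu' : ∀ r ∈ Icc r₁ r₂, HasDerivAt u' (u'' r) r)
    (hode : ∀ r ∈ Icc r₁ r₂, u'' r + ((N:ℝ) - 1) / r * u' r + f (u r) = 0)
    (hbound : ∀ r ∈ Icc r₁ r₂, |u' r| ≤ C)
    (hfu : ∀ r ∈ Icc r₁ r₂, fbar ≤ f (u r))
    (hr₁big : 2 * ((N:ℝ) - 1) * C / fbar ≤ r₁) :
    (∀ r ∈ Icc r₁ r₂, fbar / 2 ≤ |u'' r|) ∧ r₂ - r₁ ≤ 4 * C / fbar := by
  have hN1 : (0:ℝ) ≤ (N:ℝ) - 1 := by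
    have : (2:ℝ) ≤ (N:ℝ) := by exact_mod_cast hN
    linarith
  have hNC : ((N:ℝ) - 1) * C ≤ r₁ * fbar / 2 := by
    have := (div_le_iff₀ hfbar).mp hr₁big
    nlinarith
  -- key: u'' ≤ -fbar/2 on Icc
  have key : ∀ r ∈ Icc r₁ r₂, u'' r ≤ -(fbar / 2) := by
    intro r hr
    have hrpos : 0 < r := lt_of_lt_of_le hr₁ hr.1
    have habs : |((N:ℝ) - 1) / r * u' r| ≤ ((N:ℝ) - 1) / r * C := by
      rw [abs_mul, abs_of_nonneg (div_nonneg hN1 hrpos.le)]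
      exact mul_le_mul_of_nonneg_left (hbound r hr) (div_nonneg hN1 hrpos.le)
    have h2 : ((N:ℝ) - 1) / r * C ≤ fbar / 2 := by
      rw [div_mul_eq_mul_div, div_le_iff₀ hrpos]
      have : r₁ * fbar / 2 ≤ r * fbar / 2 := by
        have := hr.1; nlinarith
      nlinarith
    have hode' := hode r hr
    have hfur := hfu r hr
    have := (abs_le.mp habs).1
    linarith
  constructor
  · intro r hr
    have h := key r hr
    rw [abs_of_nonpos (by linarith)]
    linarith
  · -- mean value theorem
    have hcont : ContinuousOn u' (Icc r₁ r₂) := fun r hr =>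
      (hu' r hr).continuousAt.continuousWithinAt
    have hderiv : ∀ x ∈ Ioo r₁ r₂, HasDerivAt u' (u'' x) x := fun x hx =>
      hu' x (Ioo_subset_Icc_self hx)
    obtain ⟨c, hc, hceq⟩ := exists_hasDerivAt_eq_slope u' u'' hr₁₂ hcont hderiv
    have hcI : c ∈ Icc r₁ r₂ := Ioo_subset_Icc_self hc
    have hkey := key c hcI
    have h1 := abs_le.mp (hbound r₁ ⟨le_refl _, hr₁₂.le⟩)
    have h2 := abs_le.mp (hbound r₂ ⟨hr₁₂.le, le_refl _⟩)
    have hslope : u'' c = (u' r₂ - u' r₁) / (r₂ - r₁) := hceq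
    have hpos : 0 < r₂ - r₁ := by linarith
    have : (u' r₂ - u' r₁) / (r₂ - r₁) ≤ -(fbar/2) := hslope ▸ hkey
    have h3 : u' r₂ - u' r₁ ≤ -(fbar/2) * (r₂ - r₁) := by
      rwa [div_le_iff₀ hpos] at this
    rw [le_div_iff₀ hfbar]
    nlinarith
end

section
/- Let u be a C² solution of u'' + ((N-1)/r)u' + f(u) = 0 on (0,∞), with f continuous, F(s) = ∫₀ˢ f(t)dt, and I(r) = |u'(r)|²/2 + F(u(r)). Suppose |u'(r)| ≤ K for all r ∈ [r₁, r₂] and u is monotone on [r₁, r₂] with |u(r₂) - u(r₁)| = L. Then I(r₂) ≥ I(r₁)(1 - (K/I(r₁)) · ((N-1)L/r₁)), provided I(r₁) > 0. -/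
/-!
The energy `I(r) = u'(r)²/2 + F(u(r))` of a radial solution satisfies `I' = -((N-1)/r) u'²`.
On `[r₁, r₂]` the bound `|u'| ≤ K` gives `((N-1)/r) u'² ≤ ((N-1)K/r₁) |u'|`, and since `u` is
monotone, `|u'|` integrates to `|u(r₂) - u(r₁)|`. Hence `I(r₁) - I(r₂) ≤ (N-1)KL/r₁`, which is the
claim after dividing by `I(r₁) > 0`. The antitone case reduces to the monotone one by the symmetry
`(u, f) ↦ (-u, -f(-·))`, which preserves both the equation and the energy.
-/

open Set

noncomputable def radialEnergy (f u u' : ℝ → ℝ) (r : ℝ) : ℝ :=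
  u' r ^ 2 / 2 + ∫ t in (0:ℝ)..u r, f t

lemma hasDerivAt_radialEnergy {c r : ℝ} {f u u' : ℝ → ℝ} (hf : Continuous f)
    (hu : HasDerivAt u (u' r) r) (hode : HasDerivAt u' (-(c / r * u' r + f (u r))) r) :
    HasDerivAt (radialEnergy f u u') (-(c / r * u' r ^ 2)) r := by
  have hF : HasDerivAt (fun s => ∫ t in (0:ℝ)..u s, f t) (f (u r) * u' r) r :=
    (hf.integral_hasStrictDerivAt 0 (u r)).hasDerivAt.comp r hu
  exact ((hode.pow 2).div_const 2).add hF |>.congr_deriv (by ring)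

lemma radialEnergy_neg (f u u' : ℝ → ℝ) (r : ℝ) :
    radialEnergy (fun s => -f (-s)) (-u) (-u') r = radialEnergy f u u' r := by
  simp [radialEnergy, intervalIntegral.integral_comp_neg, intervalIntegral.integral_symm (u r)]

lemma sub_le_sub_of_hasDerivAt_le {g h g' h' : ℝ → ℝ} {a b : ℝ} (hab : a ≤ b)
    (hg : ∀ x ∈ Icc a b, HasDerivAt g (g' x) x) (hh : ∀ x ∈ Icc a b, HasDerivAt h (h' x) x)
    (hle : ∀ x ∈ Ioo a b, g' x ≤ h' x) : g b - g a ≤ h b - h a := by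
  have hderiv : ∀ x ∈ Icc a b, HasDerivAt (h - g) (h' x - g' x) x :=
    fun x hx => (hh x hx).sub (hg x hx)
  have hmono : MonotoneOn (h - g) (Icc a b) := by
    refine monotoneOn_of_hasDerivWithinAt_nonneg (f' := fun x => h' x - g' x) (convex_Icc a b)
      (fun x hx => (hderiv x hx).continuousAt.continuousWithinAt) (fun x hx => ?_) (fun x hx => ?_)
    · exact (hderiv x (interior_subset hx)).hasDerivWithinAt
    · rw [interior_Icc] at hx
      exact sub_nonneg.mpr (hle x hx)
  have := hmono (left_mem_Icc.mpr hab) (right_mem_Icc.mpr hab) hab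
  simp only [Pi.sub_apply] at this
  linarith

lemma MonotoneOn.hasDerivAt_nonneg {u : ℝ → ℝ} {u' a b x : ℝ} (hmono : MonotoneOn u (Icc a b))
    (hx : x ∈ Ioo a b) (hu : HasDerivAt u u' x) : 0 ≤ u' := by
  rw [← hu.deriv, ← derivWithin_of_mem_nhds (Icc_mem_nhds hx.1 hx.2)]
  exact hmono.derivWithin_nonneg

section RadialODE

variable {c K r₁ r₂ : ℝ} {f u u' : ℝ → ℝ}

theorem radialEnergy_sub_le_of_monotoneOn (hc : 0 ≤ c) (hf : Continuous f) (hr₁ : 0 < r₁)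
    (hr₁₂ : r₁ ≤ r₂) (hu : ∀ r ∈ Icc r₁ r₂, HasDerivAt u (u' r) r)
    (hode : ∀ r ∈ Icc r₁ r₂, HasDerivAt u' (-(c / r * u' r + f (u r))) r)
    (hbound : ∀ r ∈ Icc r₁ r₂, u' r ≤ K) (hmono : MonotoneOn u (Icc r₁ r₂)) :
    radialEnergy f u u' r₁ - radialEnergy f u u' r₂ ≤ K * (c * (u r₂ - u r₁) / r₁) := by
  have hdrop := sub_le_sub_of_hasDerivAt_le (g := -radialEnergy f u u')
    (h := fun r => c * K / r₁ * u r) hr₁₂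
    (fun r hr => (hasDerivAt_radialEnergy hf (hu r hr) (hode r hr)).neg)
    (fun r hr => (hu r hr).const_mul _) fun r hr => ?_
  · simp only [Pi.neg_apply] at hdrop
    linarith [show K * (c * (u r₂ - u r₁) / r₁) = c * K / r₁ * u r₂ - c * K / r₁ * u r₁ by ring]
  · have hr' := Ioo_subset_Icc_self hr
    have hu'₀ : 0 ≤ u' r := hmono.hasDerivAt_nonneg hr (hu r hr')
    calc -(-(c / r * u' r ^ 2)) = c / r * (u' r * u' r) := by ring
      _ ≤ c / r₁ * (u' r * K) := by gcongr; exacts [hr.1.le, hbound r hr']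
      _ = c * K / r₁ * u' r := by ring

theorem radialEnergy_sub_le (hc : 0 ≤ c) (hf : Continuous f) (hr₁ : 0 < r₁) (hr₁₂ : r₁ ≤ r₂)
    (hu : ∀ r ∈ Icc r₁ r₂, HasDerivAt u (u' r) r)
    (hode : ∀ r ∈ Icc r₁ r₂, HasDerivAt u' (-(c / r * u' r + f (u r))) r)
    (hbound : ∀ r ∈ Icc r₁ r₂, |u' r| ≤ K)
    (hmono : MonotoneOn u (Icc r₁ r₂) ∨ AntitoneOn u (Icc r₁ r₂)) :
    radialEnergy f u u' r₁ - radialEnergy f u u' r₂ ≤ K * (c * |u r₂ - u r₁| / r₁) := by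
  have hr₂ := right_mem_Icc.mpr hr₁₂
  have hr₁' := left_mem_Icc.mpr hr₁₂
  rcases hmono with hmono | hanti
  · rw [abs_of_nonneg (sub_nonneg.mpr (hmono hr₁' hr₂ hr₁₂))]
    exact radialEnergy_sub_le_of_monotoneOn hc hf hr₁ hr₁₂ hu hode
      (fun r hr => (abs_le.mp (hbound r hr)).2) hmono
  · have hneg := radialEnergy_sub_le_of_monotoneOn (f := fun s => -f (-s)) (u := -u) (u' := -u')
      hc (by fun_prop) hr₁ hr₁₂ (fun r hr => (hu r hr).neg)
      (fun r hr => (hode r hr).neg.congr_deriv (by simp only [Pi.neg_apply, neg_neg]; ring))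
      (fun r hr => neg_le.mp (abs_le.mp (hbound r hr)).1) hanti.neg
    rw [abs_of_nonpos (sub_nonpos.mpr (hanti hr₁' hr₂ hr₁₂))]
    simpa only [radialEnergy_neg, Pi.neg_apply, neg_sub_neg, neg_sub] using hneg

end RadialODE

theorem energy_loss_estimate_general
    (N : ℕ) (hN : 2 ≤ N) (f : ℝ → ℝ) (hf : Continuous f)
    (r₁ r₂ K : ℝ) (hr₁ : 0 < r₁) (hr₁₂ : r₁ < r₂)
    (u u' : ℝ → ℝ)
    (hu : ∀ r ∈ Icc r₁ r₂, HasDerivAt u (u' r) r)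
    (hode : ∀ r ∈ Icc r₁ r₂,
      HasDerivAt u' (-(((N:ℝ) - 1) / r * u' r + f (u r))) r)
    (hbound : ∀ r ∈ Icc r₁ r₂, |u' r| ≤ K)
    (hmono : MonotoneOn u (Icc r₁ r₂) ∨ AntitoneOn u (Icc r₁ r₂))
    (hIpos : 0 < (u' r₁) ^ 2 / 2 + ∫ t in (0:ℝ)..(u r₁), f t) :
    (u' r₂) ^ 2 / 2 + (∫ t in (0:ℝ)..(u r₂), f t) ≥
      ((u' r₁) ^ 2 / 2 + ∫ t in (0:ℝ)..(u r₁), f t) *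
        (1 - K / ((u' r₁) ^ 2 / 2 + ∫ t in (0:ℝ)..(u r₁), f t) *
          (((N:ℝ) - 1) * |u r₂ - u r₁| / r₁)) := by
  have hc : (0:ℝ) ≤ (N:ℝ) - 1 := by
    have : (2:ℝ) ≤ N := by exact_mod_cast hN
    linarith
  have hdrop := radialEnergy_sub_le hc hf hr₁ hr₁₂.le hu hode hbound hmono
  unfold radialEnergy at hdrop
  rw [ge_iff_le, mul_sub, mul_one, ← mul_assoc, mul_div_cancel₀ _ hIpos.ne']
  linarith

/-- Energy loss estimate: I(r₂) ≥ I(r₁)(1 - (K/I(r₁))·((N-1)L/r₁)). -/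
theorem energy_loss_estimate
    (N : ℕ) (hN : 2 ≤ N) (f : ℝ → ℝ) (hf : Continuous f)
    (r₁ r₂ K : ℝ) (hr₁ : 0 < r₁) (hr₁₂ : r₁ < r₂) (hK : 0 < K)
    (u u' : ℝ → ℝ)
    (hu : ∀ r ∈ Icc r₁ r₂, HasDerivAt u (u' r) r)
    (hode : ∀ r ∈ Icc r₁ r₂,
      HasDerivAt u' (-(((N:ℝ) - 1) / r * u' r + f (u r))) r)
    (hbound : ∀ r ∈ Icc r₁ r₂, |u' r| ≤ K)
    (hmono : MonotoneOn u (Icc r₁ r₂) ∨ AntitoneOn u (Icc r₁ r₂))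
    (hIpos : 0 < (u' r₁) ^ 2 / 2 + ∫ t in (0:ℝ)..(u r₁), f t) :
    (u' r₂) ^ 2 / 2 + (∫ t in (0:ℝ)..(u r₂), f t) ≥
      ((u' r₁) ^ 2 / 2 + ∫ t in (0:ℝ)..(u r₁), f t) *
        (1 - K / ((u' r₁) ^ 2 / 2 + ∫ t in (0:ℝ)..(u r₁), f t) *
          (((N:ℝ) - 1) * |u r₂ - u r₁| / r₁)) :=
  energy_loss_estimate_general N hN f hf r₁ r₂ K hr₁ hr₁₂ u u' hu hode hbound hmono hIpos
end
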